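/- Fix integers n_A, n_B ≥ 1. For M ∈ ℕ define N(M) = ∑_{k=1}^{n_A} C(n_A,k)·((M/2)^k − M/2 + 1)·M^{k−1} + ∑_{l=1}^{n_B} C(n_B,l)·((M/2)^l − M/2 + 1)·M^{l−1} (the number of non-trivial non-removable singular fade subspaces) and R(M) = ∑_{k=2}^{n_A+n_B} (C(n_A+n_B,k) − C(n_A,k) − C(n_B,k))·((M/2)^k − M/2 + 1)·M^{k−1} (the number of removable singular fade subspaces), where C(a,b) = 0 when b > a. Then the real sequence λ ↦ N(2^λ)/(N(2^λ) + R(2^λ)) tends to 0 as λ → ∞; that is, the fraction of non-removable singular fade subspaces among all non-trivial singular fade subspaces tends to zero for large M. -/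

import Mathlib

/-- The number of non-trivial non-removable singular fade subspaces for an
`n_A × n_B` system with `M`-PSK, as a real number. -/
noncomputable def numNonRemovable (nA nB M : ℕ) : ℝ :=
  (∑ k ∈ Finset.Icc 1 nA,
      (nA.choose k : ℝ) * (((M : ℝ) / 2) ^ k - (M : ℝ) / 2 + 1) * (M : ℝ) ^ (k - 1)) +
  (∑ l ∈ Finset.Icc 1 nB,
      (nB.choose l : ℝ) * (((M : ℝ) / 2) ^ l - (M : ℝ) / 2 + 1) * (M : ℝ) ^ (l - 1))

/-- The number of removable singular fade subspaces for an `n_A × n_B` system with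
`M`-PSK, as a real number. -/
noncomputable def numRemovable (nA nB M : ℕ) : ℝ :=
  ∑ k ∈ Finset.Icc 2 (nA + nB),
    (((nA + nB).choose k : ℝ) - (nA.choose k : ℝ) - (nB.choose k : ℝ)) *
      (((M : ℝ) / 2) ^ k - (M : ℝ) / 2 + 1) * (M : ℝ) ^ (k - 1)

/-!
Both counts are combinations of the terms `f_k(M) = ((M/2)^k - M/2 + 1) M^(k-1)`, and for
`k ≥ 2` the term `f_k` grows like `M^(2k-1) / 2^k`. With `n = n_A + n_B`, the removable count
contains `f_n` with coefficient `C(n,n) - C(n_A,n) - C(n_B,n) = 1`, whereas the non-removable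
count only involves `f_k` with `k ≤ max n_A n_B < n`. Hence the non-removable count is
`o(M^(2n-1))` while the total is asymptotic to `M^(2n-1) / 2^n`.
-/

open Filter Finset Asymptotics

noncomputable def fadeTerm (k : ℕ) (x : ℝ) : ℝ :=
  ((x / 2) ^ k - x / 2 + 1) * x ^ (k - 1)

lemma fadeTerm_succ (k : ℕ) (x : ℝ) :
    fadeTerm (k + 1) x = (1 / 2) ^ (k + 1) * x ^ (2 * k + 1) - 1 / 2 * x ^ (k + 1) + x ^ k := by
  simp only [fadeTerm, Nat.add_sub_cancel]
  ring

lemma fadeTerm_isLittleO_pow {k d : ℕ} (hk : 1 ≤ k) (hkd : 2 * k ≤ d) :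
    fadeTerm k =o[atTop] (· ^ d) := by
  obtain ⟨j, rfl⟩ := Nat.exists_eq_add_of_le' hk
  have hpow {p : ℕ} (hp : p < d) := isLittleO_pow_pow_atTop_of_lt (𝕜 := ℝ) hp
  rw [funext (fadeTerm_succ j)]
  exact (((hpow (by omega)).const_mul_left _).sub ((hpow (by omega)).const_mul_left _)).add
    (hpow (by omega))

lemma fadeTerm_isEquivalent {k : ℕ} (hk : 2 ≤ k) :
    fadeTerm k ~[atTop] fun x => (1 / 2) ^ k * x ^ (2 * k - 1) := by
  obtain ⟨j, rfl⟩ := Nat.exists_eq_add_of_le' (one_le_two.trans hk)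
  have hpow {p : ℕ} (hp : p < 2 * j + 1) := isLittleO_pow_pow_atTop_of_lt (𝕜 := ℝ) hp
  refine IsLittleO.isEquivalent ?_
  have hdiff : fadeTerm (j + 1) - (fun x => (1 / 2) ^ (j + 1) * x ^ (2 * (j + 1) - 1)) =
      fun x => -(1 / 2 * x ^ (j + 1)) + x ^ j := by
    ext x
    simp only [Pi.sub_apply, fadeTerm_succ, show 2 * (j + 1) - 1 = 2 * j + 1 by omega]
    ring
  rw [hdiff, show 2 * (j + 1) - 1 = 2 * j + 1 by omega]
  exact ((((hpow (by omega)).const_mul_left _).neg_left).add (hpow (by omega))).const_mul_right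
    (by positivity)

lemma sum_fadeTerm_isLittleO_pow (s : Finset ℕ) (c : ℕ → ℝ) {d : ℕ}
    (hs : ∀ k ∈ s, 1 ≤ k ∧ 2 * k ≤ d) :
    (fun x => ∑ k ∈ s, c k * fadeTerm k x) =o[atTop] (· ^ d) :=
  IsLittleO.fun_sum fun k hk =>
    (fadeTerm_isLittleO_pow (hs k hk).1 (hs k hk).2).const_mul_left _

lemma numNonRemovable_eq (nA nB M : ℕ) :
    numNonRemovable nA nB M = ∑ k ∈ Icc 1 nA, (nA.choose k : ℝ) * fadeTerm k M +
      ∑ k ∈ Icc 1 nB, (nB.choose k : ℝ) * fadeTerm k M := by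
  simp only [numNonRemovable, fadeTerm, mul_assoc]

lemma numRemovable_eq {nA nB : ℕ} (hA : 1 ≤ nA) (hB : 1 ≤ nB) (M : ℕ) :
    numRemovable nA nB M = ∑ k ∈ Ico 2 (nA + nB),
      (((nA + nB).choose k : ℝ) - nA.choose k - nB.choose k) * fadeTerm k M +
        fadeTerm (nA + nB) M := by
  rw [numRemovable, ← Ico_insert_right (by omega), sum_insert (by simp), add_comm]
  simp [fadeTerm, mul_assoc, Nat.choose_eq_zero_of_lt (by omega : nA < nA + nB),
    Nat.choose_eq_zero_of_lt (by omega : nB < nA + nB)]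

lemma numNonRemovable_isLittleO {nA nB : ℕ} (hA : 1 ≤ nA) (hB : 1 ≤ nB) :
    (fun M : ℕ => numNonRemovable nA nB M) =o[atTop]
      fun M : ℕ => (M : ℝ) ^ (2 * (nA + nB) - 1) := by
  have hrange (n : ℕ) (hn : n ≤ nA + nB - 1) :
      ∀ k ∈ Icc 1 n, 1 ≤ k ∧ 2 * k ≤ 2 * (nA + nB) - 1 :=
    fun k hk => by simp only [mem_Icc] at hk; omega
  simp only [numNonRemovable_eq]
  exact ((sum_fadeTerm_isLittleO_pow _ _ (hrange nA (by omega))).add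
    (sum_fadeTerm_isLittleO_pow _ _ (hrange nB (by omega)))).comp_tendsto
      tendsto_natCast_atTop_atTop

lemma numRemovable_isEquivalent {nA nB : ℕ} (hA : 1 ≤ nA) (hB : 1 ≤ nB) :
    (fun M : ℕ => numRemovable nA nB M) ~[atTop]
      fun M : ℕ => (1 / 2) ^ (nA + nB) * (M : ℝ) ^ (2 * (nA + nB) - 1) := by
  have hlower : ∀ k ∈ Ico 2 (nA + nB), 1 ≤ k ∧ 2 * k ≤ 2 * (nA + nB) - 1 :=
    fun k hk => by simp only [mem_Ico] at hk; omega
  have htop := fadeTerm_isEquivalent (k := nA + nB) (by omega)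
  simp only [numRemovable_eq hA hB, add_comm _ (fadeTerm _ _)]
  exact (htop.add_isLittleO ((sum_fadeTerm_isLittleO_pow _ _ hlower).trans_isBigO
    (isBigO_self_const_mul (by norm_num) _ _))).comp_tendsto tendsto_natCast_atTop_atTop

lemma tendsto_numNonRemovable_div_atTop {nA nB : ℕ} (hA : 1 ≤ nA) (hB : 1 ≤ nB) :
    Tendsto (fun M : ℕ =>
      numNonRemovable nA nB M / (numNonRemovable nA nB M + numRemovable nA nB M))
      atTop (nhds 0) := by
  have hR := numRemovable_isEquivalent hA hB
  have hN := (numNonRemovable_isLittleO hA hB).const_mul_right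
    (by norm_num : ((1 : ℝ) / 2) ^ (nA + nB) ≠ 0)
  have htotal := (hR.add_isLittleO hN).congr_left (.of_eq (add_comm _ _))
  exact (hN.trans_isEquivalent htotal.symm).tendsto_div_nhds_zero

theorem fraction_nonremovable_tendsto_zero (nA nB : ℕ) (hnA : 1 ≤ nA) (hnB : 1 ≤ nB) :
    Filter.Tendsto
      (fun lam : ℕ =>
        numNonRemovable nA nB (2 ^ lam) /
          (numNonRemovable nA nB (2 ^ lam) + numRemovable nA nB (2 ^ lam)))
      Filter.atTop (nhds 0) :=
  (tendsto_numNonRemovable_div_atTop hnA hnB).comp (tendsto_pow_atTop_atTop_of_one_lt one_lt_two)
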